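/- Let Z be a metric space, g* ∈ Z, P ⊆ Z a closed subset with g* ∈ P, and let R be an equivalence relation on Z satisfying: (i) uniqueness at g*: every h ∈ P with R(h, g*) equals g*; (ii) local uniqueness: there exists δ > 0 such that any g, h ∈ P with dist(g, g*) < δ, dist(h, g*) < δ and R(g, h) satisfy g = h; (iii) compactness: for every sequence (g_n) in P converging to g* and every sequence (h_n) in P with R(h_n, g_n) for all n, the sequence (h_n) admits a convergent subsequence in Z; (iv) closedness of R: if g_n → g, h_n → h and R(g_n, h_n) for all n, then R(g, h). Then there exists ε > 0 such that for every g ∈ P with dist(g, g*) < ε and every h ∈ P with R(g, h), one has h = g; i.e., near g*, each equivalence class contains at most one element of P. -/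

import Mathlib

open Filter Topology

/-! Suppose elements `g n ∈ P` tend to `g*` and each has a different `R`-partner `h n ∈ P`.
By compactness a subsequence of `h n` converges, its limit lies in `P` and, by closedness of `R`,
in the class of `g*`; so the limit is `g*` itself. Along that subsequence both `g n` and `h n`
eventually enter the neighbourhood where local uniqueness forces `h n = g n`, a contradiction. -/

section

variable {Z : Type*} [TopologicalSpace Z] {P : Set Z} {gs : Z} {R : Z → Z → Prop}

lemma exists_subseq_tendsto_of_related (hP : IsClosed P) (hR : ∀ ⦃a b⦄, R a b → R b a)
    (huniq : ∀ h ∈ P, R h gs → h = gs)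
    (hcpt : ∀ g h : ℕ → Z, (∀ n, g n ∈ P) → Tendsto g atTop (𝓝 gs) →
      (∀ n, h n ∈ P) → (∀ n, R (h n) (g n)) →
      ∃ (z : Z) (φ : ℕ → ℕ), StrictMono φ ∧ Tendsto (h ∘ φ) atTop (𝓝 z))
    (hclosed : ∀ (g h : ℕ → Z) (g₀ h₀ : Z), Tendsto g atTop (𝓝 g₀) →
      Tendsto h atTop (𝓝 h₀) → (∀ n, R (g n) (h n)) → R g₀ h₀)
    {g h : ℕ → Z} (hgP : ∀ n, g n ∈ P) (hg : Tendsto g atTop (𝓝 gs))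
    (hhP : ∀ n, h n ∈ P) (hgh : ∀ n, R (g n) (h n)) :
    ∃ φ : ℕ → ℕ, StrictMono φ ∧ Tendsto (h ∘ φ) atTop (𝓝 gs) := by
  obtain ⟨z, φ, hφ, hhz⟩ := hcpt g h hgP hg hhP fun n => hR (hgh n)
  have hzP : z ∈ P := hP.mem_of_tendsto hhz (.of_forall fun n => hhP (φ n))
  have hRz : R z gs :=
    hclosed (h ∘ φ) (g ∘ φ) z gs hhz (hg.comp hφ.tendsto_atTop) fun n => hR (hgh (φ n))
  exact ⟨φ, hφ, huniq z hzP hRz ▸ hhz⟩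

lemma eventually_unique_in_class_nhds [FirstCountableTopology Z] (hP : IsClosed P)
    (hR : ∀ ⦃a b⦄, R a b → R b a) (huniq : ∀ h ∈ P, R h gs → h = gs)
    (hloc : ∀ᶠ p in 𝓝 (gs, gs), p.1 ∈ P → p.2 ∈ P → R p.1 p.2 → p.1 = p.2)
    (hcpt : ∀ g h : ℕ → Z, (∀ n, g n ∈ P) → Tendsto g atTop (𝓝 gs) →
      (∀ n, h n ∈ P) → (∀ n, R (h n) (g n)) →
      ∃ (z : Z) (φ : ℕ → ℕ), StrictMono φ ∧ Tendsto (h ∘ φ) atTop (𝓝 z))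
    (hclosed : ∀ (g h : ℕ → Z) (g₀ h₀ : Z), Tendsto g atTop (𝓝 g₀) →
      Tendsto h atTop (𝓝 h₀) → (∀ n, R (g n) (h n)) → R g₀ h₀) :
    ∀ᶠ g in 𝓝 gs, g ∈ P → ∀ h ∈ P, R g h → h = g := by
  by_contra hfail
  simp only [not_eventually, Classical.not_imp, not_forall] at hfail
  obtain ⟨g, hg, hbad⟩ := exists_seq_forall_of_frequently hfail
  choose hgP h hhP hgh hne using hbad
  obtain ⟨φ, hφ, hhφ⟩ :=
    exists_subseq_tendsto_of_related hP hR huniq hcpt hclosed hgP hg hhP hgh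
  obtain ⟨n, hn⟩ := ((hg.comp hφ.tendsto_atTop).prodMk_nhds hhφ).eventually hloc |>.exists
  exact hne (φ n) (hn (hgP _) (hhP _) (hgh _)).symm

end

theorem global_uniqueness_near_nondegenerate_unique_solution_general
    {Z : Type*} [MetricSpace Z] (P : Set Z) (hP : IsClosed P)
    (gs : Z) (R : Z → Z → Prop) (hR : Equivalence R)
    (huniq : ∀ h ∈ P, R h gs → h = gs)
    (hloc : ∃ δ > (0 : ℝ), ∀ g ∈ P, ∀ h ∈ P,
      dist g gs < δ → dist h gs < δ → R g h → g = h)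
    (hcpt : ∀ g h : ℕ → Z, (∀ n, g n ∈ P) → Tendsto g atTop (𝓝 gs) →
      (∀ n, h n ∈ P) → (∀ n, R (h n) (g n)) →
      ∃ (z : Z) (φ : ℕ → ℕ), StrictMono φ ∧ Tendsto (h ∘ φ) atTop (𝓝 z))
    (hclosed : ∀ (g h : ℕ → Z) (g₀ h₀ : Z), Tendsto g atTop (𝓝 g₀) →
      Tendsto h atTop (𝓝 h₀) → (∀ n, R (g n) (h n)) → R g₀ h₀) :
    ∃ ε > (0 : ℝ), ∀ g ∈ P, dist g gs < ε → ∀ h ∈ P, R g h → h = g := by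
  obtain ⟨δ, hδ, hlocδ⟩ := hloc
  have hloc' : ∀ᶠ p in 𝓝 (gs, gs), p.1 ∈ P → p.2 ∈ P → R p.1 p.2 → p.1 = p.2 :=
    mem_of_superset (prod_mem_nhds (Metric.ball_mem_nhds gs hδ) (Metric.ball_mem_nhds gs hδ))
      fun p hp hp₁ hp₂ => hlocδ p.1 hp₁ p.2 hp₂ hp.1 hp.2
  obtain ⟨ε, hε, hunique⟩ := Metric.eventually_nhds_iff.1 <|
    eventually_unique_in_class_nhds (R := R) hP (fun _ _ => hR.symm) huniq hloc' hcpt hclosed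
  exact ⟨ε, hε, fun g hgP hg => hunique hg hgP⟩

/-- Abstract global uniqueness: let `Z` be a metric space, `P ⊆ Z` closed, `g* ∈ P`, and `R`
an equivalence relation on `Z` such that: (i) `g*` is the unique element of `P` in its
`R`-class; (ii) locally near `g*`, `R`-related elements of `P` coincide; (iii) sequences
`h n ∈ P` that are `R`-related to sequences `g n ∈ P` converging to `g*` have convergent
subsequences; (iv) `R` is closed under limits. Then every element of `P` sufficiently close
to `g*` is the unique element of `P` in its `R`-class. -/
theorem global_uniqueness_near_nondegenerate_unique_solution
    {Z : Type*} [MetricSpace Z] (P : Set Z) (hP : IsClosed P)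
    (gs : Z) (hgs : gs ∈ P) (R : Z → Z → Prop) (hR : Equivalence R)
    (huniq : ∀ h ∈ P, R h gs → h = gs)
    (hloc : ∃ δ > (0 : ℝ), ∀ g ∈ P, ∀ h ∈ P,
      dist g gs < δ → dist h gs < δ → R g h → g = h)
    (hcpt : ∀ g h : ℕ → Z, (∀ n, g n ∈ P) → Tendsto g atTop (𝓝 gs) →
      (∀ n, h n ∈ P) → (∀ n, R (h n) (g n)) →
      ∃ (z : Z) (φ : ℕ → ℕ), StrictMono φ ∧ Tendsto (h ∘ φ) atTop (𝓝 z))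
    (hclosed : ∀ (g h : ℕ → Z) (g₀ h₀ : Z), Tendsto g atTop (𝓝 g₀) →
      Tendsto h atTop (𝓝 h₀) → (∀ n, R (g n) (h n)) → R g₀ h₀) :
    ∃ ε > (0 : ℝ), ∀ g ∈ P, dist g gs < ε → ∀ h ∈ P, R g h → h = g :=
  global_uniqueness_near_nondegenerate_unique_solution_general P hP gs R hR huniq hloc hcpt hclosed
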